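/- arXiv:1603.05716 — 2 statements merged into one kernel-verified Lean document; each statement's English description precedes it below -/
import Mathlib

section
/- Let K̃_{n,q} be the Dunkl q-Szász-Mirakjan-Kantorovich-Stancu operator. Then for every n ∈ ℕ⁺, 0<q<1, μ>1/2, α,β ≥ 0 and x ≥ 0, applying K̃_{n,q} to the identity function t ↦ t gives K̃_{n,q}(t;x) = (n/(n+β))·(α/n + 1/([2]_q [n]_q)) + (2nq/([2]_q (n+β)))·x. -/
/-!
Write `P_k = ([n]_q x)^k q^{k(k-1)/2} / γ_{μ,q}(k)` for the Dunkl weights, so that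
`E_{μ,q}([n]_q x) = Σ P_k`. Each interval of integration has length `1/[n]_q`, and the Jackson
integral of `t` over `[a, b]` is `(b² - a²)/[2]_q`; hence the Jackson integral of the Stancu
shift of `t` over the `k`-th interval is an affine function of its left endpoint `a_k`.
The left endpoints satisfy `a_0 = 0` and `P_{k+1} a_{k+1} = q x P_k`, because the factor
`[k + 1 + 2μθ_{k+1}]_q` of `a_{k+1}` cancels the new factor of `γ_{μ,q}(k+1)`. Thus the first
moment `Σ P_k a_k` equals `q x E_{μ,q}([n]_q x)`, and the normalisation by `E_{μ,q}` leaves the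
stated affine function of `x`.
-/

/-- The `q`-number `[x]_q = (1 - q^x)/(1 - q)` for a real exponent `x`. -/
noncomputable def qNum (q x : ℝ) : ℝ := (1 - q ^ x) / (1 - q)

/-- `θ_k = 0` if `k` is even and `1` if `k` is odd. -/
def theta (k : ℕ) : ℕ := if Even k then 0 else 1

/-- The Dunkl `q`-gamma coefficients: `γ_{μ,q}(0) = 1`,
`γ_{μ,q}(k+1) = [2μθ_{k+1} + k + 1]_q ⬝ γ_{μ,q}(k)`. -/
noncomputable def gammaD (mu q : ℝ) : ℕ → ℝ
  | 0 => 1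
  | k + 1 => qNum q (2 * mu * (theta (k + 1) : ℝ) + ((k : ℝ) + 1)) * gammaD mu q k

/-- The Dunkl `q`-exponential `E_{μ,q}(x) = Σ q^{k(k-1)/2} x^k / γ_{μ,q}(k)`. -/
noncomputable def EDunkl (mu q x : ℝ) : ℝ :=
  ∑' k : ℕ, q ^ (k * (k - 1) / 2) * x ^ k / gammaD mu q k

/-- The Jackson `q`-integral `∫_a^b f(t) d_q t`. -/
noncomputable def jacksonInt (q : ℝ) (f : ℝ → ℝ) (a b : ℝ) : ℝ :=
  (1 - q) * (b * ∑' j : ℕ, q ^ j * f (b * q ^ j) - a * ∑' j : ℕ, q ^ j * f (a * q ^ j))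

/-- Lower endpoint `[k + 2μθ_k]_q / (q^{k-2} [n]_q)`. -/
noncomputable def lowB (q mu : ℝ) (n k : ℕ) : ℝ :=
  qNum q ((k : ℝ) + 2 * mu * (theta k : ℝ)) / (q ^ ((k : ℝ) - 2) * qNum q (n : ℝ))

/-- Upper endpoint `([k + 1 + 2μθ_k]_q - 1) / (q^{k-1} [n]_q) + 1/[n]_q`. -/
noncomputable def uppB (q mu : ℝ) (n k : ℕ) : ℝ :=
  (qNum q ((k : ℝ) + 1 + 2 * mu * (theta k : ℝ)) - 1) / (q ^ ((k : ℝ) - 1) * qNum q (n : ℝ))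
    + 1 / qNum q (n : ℝ)

/-- The Dunkl `q`-Szász-Mirakjan-Kantorovich-Stancu operator `K̃_{n,q}(f;x)`. -/
noncomputable def KT (n : ℕ) (q mu α β : ℝ) (f : ℝ → ℝ) (x : ℝ) : ℝ :=
  qNum q (n : ℝ) / EDunkl mu q (qNum q (n : ℝ) * x) *
    ∑' k : ℕ, (qNum q (n : ℝ) * x) ^ k / gammaD mu q k * q ^ (k * (k - 1) / 2) *
      jacksonInt q (fun t => f (((n : ℝ) * t + α) / ((n : ℝ) + β))) (lowB q mu n k) (uppB q mu n k)

open Filter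

section QNumbers

variable {q : ℝ}

lemma qNum_zero (q : ℝ) : qNum q 0 = 0 := by
  simp [qNum]

lemma qNum_two (hq : q ≠ 1) : qNum q 2 = 1 + q := by
  have : (1 : ℝ) - q ≠ 0 := sub_ne_zero.mpr hq.symm
  rw [qNum, show (2 : ℝ) = (2 : ℕ) by norm_num, Real.rpow_natCast]
  field_simp
  ring

lemma qNum_add_one (hq0 : q ≠ 0) (hq1 : q ≠ 1) (r : ℝ) :
    qNum q (r + 1) = 1 + q * qNum q r := by
  have : (1 : ℝ) - q ≠ 0 := sub_ne_zero.mpr hq1.symm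
  rw [qNum, qNum, Real.rpow_add_one hq0]
  field_simp
  ring

lemma one_le_qNum (hq0 : 0 < q) (hq1 : q < 1) {r : ℝ} (hr : 1 ≤ r) : 1 ≤ qNum q r := by
  have : q ^ r ≤ q := by simpa using Real.rpow_le_rpow_of_exponent_ge hq0 hq1.le hr
  rw [qNum, le_div_iff₀ (sub_pos.mpr hq1)]
  linarith

end QNumbers

section DunklExponential

variable {mu q : ℝ}

lemma one_le_qNum_dunkl (hq0 : 0 < q) (hq1 : q < 1) (hmu : 0 ≤ mu) (k : ℕ) :
    1 ≤ qNum q (2 * mu * (theta (k + 1) : ℝ) + ((k : ℝ) + 1)) :=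
  one_le_qNum hq0 hq1 (le_add_of_nonneg_of_le (by positivity) (le_add_of_nonneg_left k.cast_nonneg))

lemma one_le_gammaD (hq0 : 0 < q) (hq1 : q < 1) (hmu : 0 ≤ mu) : ∀ k, 1 ≤ gammaD mu q k
  | 0 => le_rfl
  | k + 1 => one_le_mul_of_one_le_of_one_le (one_le_qNum_dunkl hq0 hq1 hmu k)
      (one_le_gammaD hq0 hq1 hmu k)

-- Factored as in `KT`, so that `KT` unfolds to sums of `dunklTerm` definitionally.
noncomputable def dunklTerm (mu q y : ℝ) (k : ℕ) : ℝ :=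
  y ^ k / gammaD mu q k * q ^ (k * (k - 1) / 2)

lemma EDunkl_eq_tsum_dunklTerm (mu q y : ℝ) : EDunkl mu q y = ∑' k, dunklTerm mu q y k :=
  tsum_congr fun k => by rw [dunklTerm]; ring

lemma dunklTerm_zero (y : ℝ) : dunklTerm mu q y 0 = 1 := by
  simp [dunklTerm, gammaD]

lemma dunklTerm_succ (y : ℝ) (k : ℕ) :
    dunklTerm mu q y (k + 1) =
      dunklTerm mu q y k * (y * q ^ k) / qNum q (2 * mu * (theta (k + 1) : ℝ) + ((k : ℝ) + 1)) := by
  rw [dunklTerm, dunklTerm, gammaD, Nat.triangle_succ, pow_add, pow_succ]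
  ring

lemma dunklTerm_nonneg (hq0 : 0 < q) (hq1 : q < 1) (hmu : 0 ≤ mu) {y : ℝ} (hy : 0 ≤ y)
    (k : ℕ) : 0 ≤ dunklTerm mu q y k := by
  have := one_le_gammaD hq0 hq1 hmu k
  unfold dunklTerm
  positivity

lemma summable_dunklTerm (hq0 : 0 < q) (hq1 : q < 1) (hmu : 0 ≤ mu) (y : ℝ) :
    Summable (dunklTerm mu q y) := by
  refine summable_of_ratio_norm_eventually_le (r := 1 / 2) (by norm_num) ?_
  have hsmall : ∀ᶠ k : ℕ in atTop, ‖y * q ^ k‖ ≤ 1 / 2 := by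
    have : Tendsto (fun k : ℕ => ‖y * q ^ k‖) atTop (nhds 0) := by
      simpa using ((tendsto_pow_atTop_nhds_zero_of_lt_one hq0.le hq1).const_mul y).norm
    exact this.eventually (eventually_le_nhds (by norm_num))
  filter_upwards [hsmall] with k hk
  have hQ := one_le_qNum_dunkl hq0 hq1 hmu k
  rw [dunklTerm_succ, norm_div, norm_mul, Real.norm_of_nonneg (zero_le_one.trans hQ)]
  calc ‖dunklTerm mu q y k‖ * ‖y * q ^ k‖ / _ ≤ ‖dunklTerm mu q y k‖ * ‖y * q ^ k‖ :=
        div_le_self (by positivity) hQ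
    _ ≤ 1 / 2 * ‖dunklTerm mu q y k‖ := by nlinarith [norm_nonneg (dunklTerm mu q y k)]

lemma one_le_EDunkl (hq0 : 0 < q) (hq1 : q < 1) (hmu : 0 ≤ mu) {y : ℝ} (hy : 0 ≤ y) :
    1 ≤ EDunkl mu q y := by
  rw [EDunkl_eq_tsum_dunklTerm]
  exact (dunklTerm_zero y).symm.le.trans <|
    (summable_dunklTerm hq0 hq1 hmu y).le_tsum 0 fun k _ => dunklTerm_nonneg hq0 hq1 hmu hy k

end DunklExponential

section Endpoints

variable {q : ℝ} (mu : ℝ) (n : ℕ)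

lemma lowB_zero : lowB q mu n 0 = 0 := by
  simp [lowB, theta, qNum_zero]

lemma lowB_succ (hq : q ≠ 0) (k : ℕ) :
    lowB q mu n (k + 1) =
      q ^ 2 * qNum q (2 * mu * (theta (k + 1) : ℝ) + ((k : ℝ) + 1)) / (q ^ (k + 1) * qNum q n) := by
  rw [lowB, show ((k + 1 : ℕ) : ℝ) - 2 = ((k + 1 : ℕ) : ℝ) - (2 : ℕ) by norm_num,
    Real.rpow_sub_natCast hq, Real.rpow_natCast]
  push_cast
  rw [add_comm ((k : ℝ) + 1)]
  field_simp

lemma uppB_eq_lowB_add (hq0 : q ≠ 0) (hq1 : q ≠ 1) (k : ℕ) :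
    uppB q mu n k = lowB q mu n k + 1 / qNum q n := by
  rw [uppB, lowB, add_right_comm, qNum_add_one hq0 hq1, add_sub_cancel_left,
    show (k : ℝ) - 1 = (k : ℝ) - 2 + 1 by ring, Real.rpow_add_one hq0]
  congr 1
  rw [mul_right_comm (q ^ ((k : ℝ) - 2)) q, mul_comm q, mul_div_mul_right _ _ hq0]

end Endpoints

lemma jacksonInt_affine {q : ℝ} (hq : |q| < 1) (c d a b : ℝ) :
    jacksonInt q (fun t => c * t + d) a b = c * (b ^ 2 - a ^ 2) / (1 + q) + d * (b - a) := by
  have hq2 : |q ^ 2| < 1 := by rw [abs_pow]; nlinarith [abs_nonneg q]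
  have hsum : ∀ e : ℝ, ∑' j : ℕ, q ^ j * (c * (e * q ^ j) + d) = c * e / (1 - q ^ 2) + d / (1 - q) := by
    intro e
    have hsplit : (fun j : ℕ => q ^ j * (c * (e * q ^ j) + d))
        = fun j : ℕ => c * e * (q ^ 2) ^ j + d * q ^ j := by
      funext j
      ring
    rw [hsplit, ((summable_geometric_of_abs_lt_one hq2).mul_left _).tsum_add
      ((summable_geometric_of_abs_lt_one hq).mul_left _), tsum_mul_left, tsum_mul_left,
      tsum_geometric_of_abs_lt_one hq2, tsum_geometric_of_abs_lt_one hq]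
    ring
  have h1 : 1 - q ≠ 0 := by linarith [le_abs_self q]
  have h2 : 1 + q ≠ 0 := by linarith [neg_abs_le q]
  rw [jacksonInt, hsum, hsum, show 1 - q ^ 2 = (1 - q) * (1 + q) by ring]
  field_simp
  ring

section FirstMoment

variable {mu q : ℝ} {n : ℕ}

lemma dunklTerm_succ_mul_lowB (hq0 : 0 < q) (hq1 : q < 1) (hmu : 0 ≤ mu)
    (hN : qNum q n ≠ 0) (x : ℝ) (k : ℕ) :
    dunklTerm mu q (qNum q n * x) (k + 1) * lowB q mu n (k + 1) =
      q * x * dunklTerm mu q (qNum q n * x) k := by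
  have hQ := (zero_lt_one.trans_le (one_le_qNum_dunkl hq0 hq1 hmu k)).ne'
  rw [dunklTerm_succ, lowB_succ mu n hq0.ne']
  field_simp
  ring

lemma summable_dunklTerm_mul_lowB (hq0 : 0 < q) (hq1 : q < 1) (hmu : 0 ≤ mu)
    (hN : qNum q n ≠ 0) (x : ℝ) :
    Summable fun k => dunklTerm mu q (qNum q n * x) k * lowB q mu n k :=
  (summable_nat_add_iff 1).mp <| by
    simpa only [dunklTerm_succ_mul_lowB hq0 hq1 hmu hN x]
      using (summable_dunklTerm hq0 hq1 hmu _).mul_left (q * x)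

lemma tsum_dunklTerm_mul_lowB (hq0 : 0 < q) (hq1 : q < 1) (hmu : 0 ≤ mu)
    (hN : qNum q n ≠ 0) (x : ℝ) :
    ∑' k, dunklTerm mu q (qNum q n * x) k * lowB q mu n k = q * x * EDunkl mu q (qNum q n * x) := by
  rw [(summable_dunklTerm_mul_lowB hq0 hq1 hmu hN x).tsum_eq_zero_add, lowB_zero, mul_zero,
    zero_add, tsum_congr (dunklTerm_succ_mul_lowB hq0 hq1 hmu hN x), tsum_mul_left,
    EDunkl_eq_tsum_dunklTerm]

end FirstMoment

lemma KT_eq_of_jacksonInt_affine {n : ℕ} (hn : 0 < n) {q mu α β x : ℝ} (hq0 : 0 < q)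
    (hq1 : q < 1) (hmu : 0 ≤ mu) (hx : 0 ≤ x) {f : ℝ → ℝ} (A B : ℝ)
    (hf : ∀ k, jacksonInt q (fun t => f (((n : ℝ) * t + α) / ((n : ℝ) + β)))
      (lowB q mu n k) (uppB q mu n k) = A * lowB q mu n k + B) :
    KT n q mu α β f x = qNum q n * (A * q * x + B) := by
  have hN := one_le_qNum hq0 hq1 (Nat.one_le_cast.mpr hn)
  have hE : EDunkl mu q (qNum q n * x) ≠ 0 :=
    (zero_lt_one.trans_le (one_le_EDunkl hq0 hq1 hmu (mul_nonneg (zero_le_one.trans hN) hx))).ne'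
  have hP := summable_dunklTerm hq0 hq1 hmu (qNum q n * x)
  have hN0 : qNum q n ≠ 0 := (one_pos.trans_le hN).ne'
  change qNum q n / EDunkl mu q (qNum q n * x) *
    ∑' k, dunklTerm mu q (qNum q n * x) k * jacksonInt q _ (lowB q mu n k) (uppB q mu n k) = _
  simp_rw [hf, mul_add, mul_left_comm _ A]
  rw [((summable_dunklTerm_mul_lowB hq0 hq1 hmu hN0 x).mul_left A).tsum_add (hP.mul_right B),
    tsum_mul_left, tsum_mul_right, tsum_dunklTerm_mul_lowB hq0 hq1 hmu hN0,
    ← EDunkl_eq_tsum_dunklTerm]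
  field_simp

theorem KT_id_general (n : ℕ) (hn : 0 < n) (q mu α β x : ℝ)
    (hq0 : 0 < q) (hq1 : q < 1) (hmu : 1 / 2 < mu) (hβ : 0 ≤ β) (hx : 0 ≤ x) :
    KT n q mu α β (fun t => t) x =
      (n : ℝ) / ((n : ℝ) + β) * (α / (n : ℝ) + 1 / (qNum q 2 * qNum q (n : ℝ)))
        + 2 * (n : ℝ) * q / (qNum q 2 * ((n : ℝ) + β)) * x := by
  have hn0 : (n : ℝ) ≠ 0 := Nat.cast_ne_zero.mpr hn.ne'
  have hnβ : (n : ℝ) + β ≠ 0 := by positivity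
  have hN : qNum q n ≠ 0 := (one_pos.trans_le (one_le_qNum hq0 hq1 (Nat.one_le_cast.mpr hn))).ne'
  have h1q : 1 + q ≠ 0 := by positivity
  set c := (n : ℝ) / ((n : ℝ) + β) with hc
  set d := α / ((n : ℝ) + β) with hd
  have hstancu : (fun t : ℝ => ((n : ℝ) * t + α) / ((n : ℝ) + β)) = fun t => c * t + d := by
    funext t
    ring
  rw [KT_eq_of_jacksonInt_affine hn hq0 hq1 (by linarith) hx (2 * c / ((1 + q) * qNum q n))
    (c / ((1 + q) * qNum q n ^ 2) + d / qNum q n), qNum_two hq1.ne]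
  · rw [hc, hd]
    field_simp
    ring
  · intro k
    rw [hstancu, jacksonInt_affine (abs_lt.mpr ⟨by linarith, hq1⟩),
      uppB_eq_lowB_add mu n hq0.ne' hq1.ne]
    field_simp
    ring

/-- `K̃_{n,q}(t; x) = (n/(n+β))(α/n + 1/([2]_q [n]_q)) + (2nq/([2]_q (n+β))) x`. -/
theorem KT_id (n : ℕ) (hn : 0 < n) (q mu α β x : ℝ)
    (hq0 : 0 < q) (hq1 : q < 1) (hmu : 1 / 2 < mu) (hα : 0 ≤ α) (hβ : 0 ≤ β) (hx : 0 ≤ x) :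
    KT n q mu α β (fun t => t) x =
      (n : ℝ) / ((n : ℝ) + β) * (α / (n : ℝ) + 1 / (qNum q 2 * qNum q (n : ℝ)))
        + 2 * (n : ℝ) * q / (qNum q 2 * ((n : ℝ) + β)) * x :=
  KT_id_general n hn q mu α β x hq0 hq1 hmu hβ hx
end

section
/- (Korovkin's theorem) Let a < b be real numbers and let (L_n) be a sequence of positive linear operators from C[a,b] to C[a,b] (positive meaning L_n f ≥ 0 pointwise whenever f ≥ 0 pointwise). If for j = 0, 1, 2 the sequence L_n(t ↦ t^j) converges uniformly on [a,b] to the function t ↦ t^j, then for every f ∈ C[a,b] the sequence L_n f converges uniformly on [a,b] to f. -/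
open Filter Topology

set_option maxHeartbeats 1000000

/-- **Korovkin's theorem.** If a sequence of positive linear operators on `C[a,b]`
converges uniformly to the identity on the test functions `1, t, t²`, then it
converges uniformly on all of `C[a,b]`. -/
theorem korovkin (a b : ℝ) (hab : a < b)
    (L : ℕ → C(Set.Icc a b, ℝ) →ₗ[ℝ] C(Set.Icc a b, ℝ))
    (hpos : ∀ (n : ℕ) (f : C(Set.Icc a b, ℝ)), (∀ t, 0 ≤ f t) → ∀ t, 0 ≤ (L n f) t)
    (hmono : ∀ j : ℕ, j ≤ 2 →
      Filter.Tendsto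
        (fun n => ‖L n ⟨fun t => (t : ℝ) ^ j, by fun_prop⟩
            - (⟨fun t => (t : ℝ) ^ j, by fun_prop⟩ : C(Set.Icc a b, ℝ))‖)
        Filter.atTop (nhds 0))
    (f : C(Set.Icc a b, ℝ)) :
    Filter.Tendsto (fun n => ‖L n f - f‖) Filter.atTop (nhds 0) := by
  haveI : Nonempty (Set.Icc a b) := ⟨⟨a, le_refl a, hab.le⟩⟩
  set e0 : C(Set.Icc a b, ℝ) := ⟨fun t => (t : ℝ) ^ 0, by fun_prop⟩ with he0
  set e1 : C(Set.Icc a b, ℝ) := ⟨fun t => (t : ℝ) ^ 1, by fun_prop⟩ with he1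
  set e2 : C(Set.Icc a b, ℝ) := ⟨fun t => (t : ℝ) ^ 2, by fun_prop⟩ with he2
  have h0 : Tendsto (fun n => ‖L n e0 - e0‖) atTop (𝓝 0) := hmono 0 (by norm_num)
  have h1 : Tendsto (fun n => ‖L n e1 - e1‖) atTop (𝓝 0) := hmono 1 (by norm_num)
  have h2 : Tendsto (fun n => ‖L n e2 - e2‖) atTop (𝓝 0) := hmono 2 (by norm_num)
  rw [Metric.tendsto_atTop]
  intro ε hε
  obtain ⟨K, hK⟩ : ∃ K : ℝ, K = max |a| |b| := ⟨_, rfl⟩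
  have hK0 : 0 ≤ K := hK ▸ le_trans (abs_nonneg a) (le_max_left _ _)
  have hsK : ∀ s : Set.Icc a b, |(s : ℝ)| ≤ K := by
    rintro ⟨s, hs1, hs2⟩
    exact hK ▸ abs_le_max_abs_abs hs1 hs2
  obtain ⟨M, hM⟩ : ∃ M : ℝ, M = ‖f‖ := ⟨_, rfl⟩
  have hM0 : 0 ≤ M := hM ▸ norm_nonneg f
  have hMb : ∀ t : Set.Icc a b, |f t| ≤ M := fun t => hM ▸ f.norm_coe_le_norm t
  -- uniform continuity
  obtain ⟨δ, hδ, hδ'⟩ := Metric.uniformContinuous_iff.mp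
    (CompactSpace.uniformContinuous_of_continuous f.continuous) (ε / 4) (by positivity)
  obtain ⟨c, hc⟩ : ∃ c : ℝ, c = 2 * M / δ ^ 2 := ⟨_, rfl⟩
  have hc0 : 0 ≤ c := by rw [hc]; positivity
  have hcδ : c * δ ^ 2 = 2 * M := by
    rw [hc]; field_simp
  -- the key pointwise inequality
  have key : ∀ s t : Set.Icc a b, |f t - f s| ≤ ε / 4 + c * ((t : ℝ) - s) ^ 2 := by
    intro s t
    by_cases h : dist (t : ℝ) (s : ℝ) < δ
    · have hd : dist t s < δ := by rwa [Subtype.dist_eq]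
      have := hδ' hd
      rw [Real.dist_eq] at this
      nlinarith [sq_nonneg ((t : ℝ) - s)]
    · push_neg at h
      rw [Real.dist_eq] at h
      have h2' : δ ^ 2 ≤ ((t : ℝ) - s) ^ 2 := by
        nlinarith [abs_nonneg ((t : ℝ) - s), sq_abs ((t : ℝ) - s)]
      have hf : |f t - f s| ≤ 2 * M :=
        (abs_sub _ _).trans (by linarith [hMb t, hMb s])
      nlinarith
  -- constants
  obtain ⟨C, hC⟩ : ∃ C : ℝ, C = ε / 4 + c * K ^ 2 + M + 2 * c * K + c := ⟨_, rfl⟩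
  have hC0 : 0 ≤ C := by rw [hC]; positivity
  obtain ⟨η, hη⟩ : ∃ η : ℝ, η = ε / (2 * (C + 1)) := ⟨_, rfl⟩
  have hη0 : 0 < η := by rw [hη]; positivity
  have hCη : C * η ≤ ε / 2 := by
    have h' : (C + 1) * η = ε / 2 := by
      rw [hη]; field_simp
    nlinarith
  -- pick N so all three defect norms are < η
  obtain ⟨N0, hN0⟩ := (Metric.tendsto_atTop.mp h0) η hη0
  obtain ⟨N1, hN1⟩ := (Metric.tendsto_atTop.mp h1) η hη0
  obtain ⟨N2, hN2⟩ := (Metric.tendsto_atTop.mp h2) η hη0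
  refine ⟨max N0 (max N1 N2), fun n hn => ?_⟩
  have hD0 : ‖L n e0 - e0‖ ≤ η := by
    have := hN0 n (le_trans (le_max_left _ _) hn)
    rw [Real.dist_eq, sub_zero, abs_of_nonneg (norm_nonneg _)] at this
    exact this.le
  have hD1 : ‖L n e1 - e1‖ ≤ η := by
    have := hN1 n (le_trans ((le_max_left _ _).trans (le_max_right _ _)) hn)
    rw [Real.dist_eq, sub_zero, abs_of_nonneg (norm_nonneg _)] at this
    exact this.le
  have hD2 : ‖L n e2 - e2‖ ≤ η := by
    have := hN2 n (le_trans ((le_max_right _ _).trans (le_max_right _ _)) hn)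
    rw [Real.dist_eq, sub_zero, abs_of_nonneg (norm_nonneg _)] at this
    exact this.le
  rw [Real.dist_eq, sub_zero, abs_of_nonneg (norm_nonneg _)]
  -- main estimate: ‖L n f - f‖ ≤ 3ε/4 < ε
  have main : ‖L n f - f‖ ≤ 3 * ε / 4 := by
    rw [ContinuousMap.norm_le _ (by positivity)]
    intro s
    rw [Real.norm_eq_abs, ContinuousMap.sub_apply]
    -- the comparison function G
    set G : C(Set.Icc a b, ℝ) :=
      (ε / 4 + c * (s : ℝ) ^ 2) • e0 - (2 * c * (s : ℝ)) • e1 + c • e2 with hG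
    have hGeval : ∀ t : Set.Icc a b, G t = ε / 4 + c * ((t : ℝ) - s) ^ 2 := by
      intro t
      simp only [hG, ContinuousMap.add_apply, ContinuousMap.sub_apply,
        ContinuousMap.smul_apply, smul_eq_mul, he0, he1, he2,
        ContinuousMap.coe_mk, pow_zero, pow_one]
      ring
    set P : C(Set.Icc a b, ℝ) := f - f s • e0 with hP
    have hPeval : ∀ t : Set.Icc a b, P t = f t - f s := by
      intro t
      simp [hP, he0, ContinuousMap.sub_apply, ContinuousMap.smul_apply]
    -- positivity gives |L n P (s)| ≤ L n G (s)
    have q1 : 0 ≤ ((L n) (G - P)) s := by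
      refine hpos n _ (fun t => ?_) s
      rw [ContinuousMap.sub_apply, hGeval t, hPeval t]
      have := (abs_le.mp (key s t)).2
      linarith
    have q2 : 0 ≤ ((L n) (G + P)) s := by
      refine hpos n _ (fun t => ?_) s
      rw [ContinuousMap.add_apply, hGeval t, hPeval t]
      have := (abs_le.mp (key s t)).1
      linarith
    rw [map_sub, ContinuousMap.sub_apply] at q1
    rw [map_add, ContinuousMap.add_apply] at q2
    -- evaluate L n P at s
    have hLP : ((L n) P) s = ((L n) f) s - f s * ((L n) e0) s := by
      rw [hP, map_sub, map_smul, ContinuousMap.sub_apply, ContinuousMap.smul_apply,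
        smul_eq_mul]
    -- evaluate L n G at s
    have hLG : ((L n) G) s = (ε / 4 + c * (s : ℝ) ^ 2) * ((L n) e0) s
        - (2 * c * (s : ℝ)) * ((L n) e1) s + c * ((L n) e2) s := by
      rw [hG, map_add, map_sub, map_smul, map_smul, map_smul,
        ContinuousMap.add_apply, ContinuousMap.sub_apply,
        ContinuousMap.smul_apply, ContinuousMap.smul_apply, ContinuousMap.smul_apply,
        smul_eq_mul, smul_eq_mul, smul_eq_mul]
    -- defects at s
    obtain ⟨d0, hd0⟩ : ∃ d : ℝ, d = ((L n) e0 - e0) s := ⟨_, rfl⟩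
    obtain ⟨d1, hd1⟩ : ∃ d : ℝ, d = ((L n) e1 - e1) s := ⟨_, rfl⟩
    obtain ⟨d2, hd2⟩ : ∃ d : ℝ, d = ((L n) e2 - e2) s := ⟨_, rfl⟩
    have hu0 : ((L n) e0) s = 1 + d0 := by
      rw [hd0, ContinuousMap.sub_apply]; simp [he0]
    have hu1 : ((L n) e1) s = (s : ℝ) + d1 := by
      rw [hd1, ContinuousMap.sub_apply]; simp [he1]
    have hu2 : ((L n) e2) s = (s : ℝ) ^ 2 + d2 := by
      rw [hd2, ContinuousMap.sub_apply]; simp [he2]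
    have hb0 : |d0| ≤ η := by
      have := ((L n) e0 - e0).norm_coe_le_norm s
      rw [Real.norm_eq_abs, ← hd0] at this
      exact this.trans hD0
    have hb1 : |d1| ≤ η := by
      have := ((L n) e1 - e1).norm_coe_le_norm s
      rw [Real.norm_eq_abs, ← hd1] at this
      exact this.trans hD1
    have hb2 : |d2| ≤ η := by
      have := ((L n) e2 - e2).norm_coe_le_norm s
      rw [Real.norm_eq_abs, ← hd2] at this
      exact this.trans hD2
    obtain ⟨hb0l, hb0r⟩ := abs_le.mp hb0
    obtain ⟨hb1l, hb1r⟩ := abs_le.mp hb1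
    obtain ⟨hb2l, hb2r⟩ := abs_le.mp hb2
    obtain ⟨hwl, hwr⟩ := abs_le.mp (hMb s)
    obtain ⟨hsl, hsr⟩ := abs_le.mp (hsK s)
    have hs2 : (s : ℝ) ^ 2 ≤ K ^ 2 := sq_le_sq' hsl hsr
    -- bound L n G (s)
    have hLGb : ((L n) G) s ≤ ε / 4 + (ε / 4 + c * K ^ 2) * η + 2 * c * K * η + c * η := by
      rw [hLG, hu0, hu1, hu2]
      have t1 : (ε / 4 + c * (s : ℝ) ^ 2) * d0 ≤ (ε / 4 + c * K ^ 2) * η := by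
        have h1' : (ε / 4 + c * (s : ℝ) ^ 2) * d0 ≤ (ε / 4 + c * (s : ℝ) ^ 2) * η :=
          mul_le_mul_of_nonneg_left hb0r
            (by nlinarith only [sq_nonneg (s : ℝ), hc0, hε])
        have h2' : (ε / 4 + c * (s : ℝ) ^ 2) * η ≤ (ε / 4 + c * K ^ 2) * η := by
          apply mul_le_mul_of_nonneg_right _ hη0.le
          nlinarith only [hs2, hc0]
        linarith only [h1', h2']
      have t2 : -(2 * c * (s : ℝ) * d1) ≤ 2 * c * K * η := by
        have habs : |2 * c * (s : ℝ) * d1| ≤ 2 * c * K * η := by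
          rw [abs_mul, abs_mul, abs_of_nonneg (by positivity : (0:ℝ) ≤ 2 * c)]
          have h1' : 2 * c * |(s : ℝ)| ≤ 2 * c * K :=
            mul_le_mul_of_nonneg_left (hsK s) (by positivity)
          exact mul_le_mul h1' hb1 (abs_nonneg _) (by positivity)
        linarith [neg_abs_le (2 * c * (s : ℝ) * d1)]
      have t3 : c * d2 ≤ c * η := mul_le_mul_of_nonneg_left hb2r hc0
      have expand : (ε / 4 + c * (s : ℝ) ^ 2) * (1 + d0) - 2 * c * (s : ℝ) * ((s : ℝ) + d1)
          + c * ((s : ℝ) ^ 2 + d2)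
          = ε / 4 + (ε / 4 + c * (s : ℝ) ^ 2) * d0 + -(2 * c * (s : ℝ) * d1) + c * d2 := by
        ring
      rw [expand]
      linarith only [t1, t2, t3]
    -- combine
    rw [hLP] at q1 q2
    have hq : |((L n) f) s - f s * ((L n) e0) s| ≤ ((L n) G) s := by
      rw [abs_le]; constructor <;> linarith only [q1, q2]
    have hsplit : ((L n) f) s - f s = (((L n) f) s - f s * ((L n) e0) s) + f s * d0 := by
      rw [hu0]; ring
    have hfd0 : |f s * d0| ≤ M * η := by
      rw [abs_mul]
      exact mul_le_mul (hMb s) hb0 (abs_nonneg _) hM0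
    obtain ⟨hql, hqr⟩ := abs_le.mp hq
    obtain ⟨hfl, hfr⟩ := abs_le.mp hfd0
    have hCη' : (ε / 4 + c * K ^ 2) * η + 2 * c * K * η + c * η + M * η ≤ ε / 2 := by
      have heq : (ε / 4 + c * K ^ 2) * η + 2 * c * K * η + c * η + M * η = C * η := by
        rw [hC]; ring
      linarith only [heq, hCη]
    rw [hsplit, abs_le]
    constructor
    · linarith only [hql, hfl, hLGb, hCη']
    · linarith only [hqr, hfr, hLGb, hCη']
  linarith only [main, hε]
end
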